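/- Suppose (α_k), (β_k) are sequences of nonnegative reals with α₀ < 0.130716944, α_{k+1} ≤ α_k²/ψ(α_k)² and β_{k+1} ≤ ((1-α_k)/ψ(α_k))·α_k·β_k for all k, where ψ(u) = 1 - 4u + 2u². Then for all k: α_k ≤ (1/2)^(2^k - 1)·α₀ and β_k ≤ (1/2)^(2^k - 1)·β₀. -/

import Mathlib

/-!
On `(-∞, 1]` the polynomial `ψ` is decreasing, so every `α_k ≤ α₀ < 1/4` satisfies
`ψ(α_k) ≥ ψ(α₀) > 0`. The threshold on `α₀` is exactly what gives `2α₀ ≤ ψ(α₀)²`, and then also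
`2α₀ ≤ ψ(α₀)` since `ψ(α₀) ≤ 1`. Hence `α_{k+1} ≤ α_k² / (2α₀)` and `β_{k+1} ≤ α_k β_k / (2α₀)`,
and inserting the inductive bounds `α_k ≤ t α₀`, `β_k ≤ t β₀` with `t = (1/2)^(2^k - 1)` yields
the factor `t² / 2 = (1/2)^(2^(k+1) - 1)`.
-/

def psi (u : ℝ) : ℝ := 1 - 4 * u + 2 * u ^ 2

lemma psi_pos {u : ℝ} (h : u ≤ 1 / 4) : 0 < psi u := by
  unfold psi; nlinarith [sq_nonneg u]

lemma psi_le_one {u : ℝ} (h0 : 0 ≤ u) (h2 : u ≤ 2) : psi u ≤ 1 := by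
  unfold psi; nlinarith

lemma psi_le_psi_of_le {a b : ℝ} (hab : a ≤ b) (hb : b ≤ 1) : psi b ≤ psi a := by
  unfold psi; nlinarith

lemma two_mul_le_psi_sq {u : ℝ} (h : u < 0.130716944) : 2 * u ≤ psi u ^ 2 := by
  unfold psi
  nlinarith [sq_nonneg (u - 0.130716944), sq_nonneg u]

lemma sq_div_psi_sq_le {a a₀ t : ℝ} (ha : 0 ≤ a) (hat : a ≤ t * a₀)
    (haa₀ : a ≤ a₀) (ha₀ : a₀ ≤ 1 / 4) (hψ : 2 * a₀ ≤ psi a₀ ^ 2) :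
    a ^ 2 / psi a ^ 2 ≤ 1 / 2 * t ^ 2 * a₀ := by
  have hψa₀ : 0 < psi a₀ := psi_pos ha₀
  have hψa : psi a₀ ≤ psi a := psi_le_psi_of_le haa₀ (by linarith)
  rw [div_le_iff₀ (by nlinarith)]
  calc a ^ 2 ≤ (t * a₀) ^ 2 := pow_le_pow_left₀ ha hat 2
    _ = 1 / 2 * t ^ 2 * a₀ * (2 * a₀) := by ring
    _ ≤ 1 / 2 * t ^ 2 * a₀ * psi a ^ 2 := by
      have : 0 ≤ a₀ := ha.trans haa₀
      gcongr
      exact hψ.trans (pow_le_pow_left₀ hψa₀.le hψa 2)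

lemma one_sub_div_psi_mul_le {a a₀ t : ℝ} (ha : 0 ≤ a) (ht : 0 ≤ t) (hat : a ≤ t * a₀)
    (haa₀ : a ≤ a₀) (ha₀ : a₀ ≤ 1 / 4) (hψ : 2 * a₀ ≤ psi a₀ ^ 2) :
    (1 - a) / psi a * a ≤ t / 2 := by
  have hψa₀ : 0 < psi a₀ := psi_pos ha₀
  have hψa : psi a₀ ≤ psi a := psi_le_psi_of_le haa₀ (by linarith)
  have h2a₀ : 2 * a₀ ≤ psi a₀ :=
    hψ.trans (by nlinarith [psi_le_one (ha.trans haa₀) (by linarith)])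
  rw [div_mul_eq_mul_div, div_le_iff₀ (by linarith)]
  calc (1 - a) * a ≤ t * a₀ := by nlinarith
    _ ≤ t / 2 * psi a := by nlinarith

lemma pow_two_pow_succ_sub_one {M : Type*} [Monoid M] (x : M) (k : ℕ) :
    x ^ (2 ^ (k + 1) - 1) = x * (x ^ (2 ^ k - 1)) ^ 2 := by
  rw [← pow_mul, ← pow_succ']
  congr 1
  have := Nat.one_le_two_pow (n := k)
  rw [pow_succ]; omega

/-- Inductive core of the R-α theorem: if `(α_k)`, `(β_k)` are nonnegative with
`α₀ < 0.130716944`, `α_{k+1} ≤ α_k²/ψ(α_k)²` and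
`β_{k+1} ≤ ((1-α_k)/ψ(α_k))·α_k·β_k` where `ψ(u) = 1-4u+2u²`, then
`α_k ≤ (1/2)^(2^k-1) α₀` and `β_k ≤ (1/2)^(2^k-1) β₀`. -/
theorem alpha_beta_quadratic_decay (α β : ℕ → ℝ)
    (hα0 : ∀ k, 0 ≤ α k) (hβ0 : ∀ k, 0 ≤ β k)
    (ha : α 0 < 0.130716944)
    (hαrec : ∀ k, α (k + 1) ≤ (α k) ^ 2 / (1 - 4 * α k + 2 * (α k) ^ 2) ^ 2)
    (hβrec : ∀ k, β (k + 1) ≤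
      ((1 - α k) / (1 - 4 * α k + 2 * (α k) ^ 2)) * α k * β k) :
    ∀ k, α k ≤ ((1 : ℝ) / 2) ^ (2 ^ k - 1) * α 0 ∧
      β k ≤ ((1 : ℝ) / 2) ^ (2 ^ k - 1) * β 0 := by
  have hψ := two_mul_le_psi_sq ha
  have ha₀ : α 0 ≤ 1 / 4 := by linarith
  intro k
  induction k with
  | zero => simp
  | succ k ih =>
    obtain ⟨ihα, ihβ⟩ := ih
    set t : ℝ := (1 / 2) ^ (2 ^ k - 1)
    have ht : 0 ≤ t := by positivity
    have hak : α k ≤ α 0 :=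
      ihα.trans (mul_le_of_le_one_left (hα0 0) (pow_le_one₀ (by norm_num) (by norm_num)))
    rw [pow_two_pow_succ_sub_one]
    constructor
    · calc α (k + 1) ≤ α k ^ 2 / psi (α k) ^ 2 := hαrec k
        _ ≤ 1 / 2 * t ^ 2 * α 0 := sq_div_psi_sq_le (hα0 k) ihα hak ha₀ hψ
    · calc β (k + 1) ≤ (1 - α k) / psi (α k) * α k * β k := hβrec k
        _ ≤ t / 2 * β k := by
          gcongr
          · exact hβ0 k
          · exact one_sub_div_psi_mul_le (hα0 k) ht ihα hak ha₀ hψ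
        _ ≤ t / 2 * (t * β 0) := by gcongr
        _ = 1 / 2 * t ^ 2 * β 0 := by ring
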